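/- Let f, f' ⊂ ℝ^{4,2} be 2-dimensional totally isotropic subspaces (contact elements) with f ∩ f' ≠ {0}, and let r ∈ f, r' ∈ f' be nonzero vectors with ⟨r,r'⟩ ≠ 0. Then f ∩ f' is exactly 1-dimensional, f = span({r} ∪ (f ∩ f')) and f' = span({r'} ∪ (f ∩ f')), and for every a = μ·r + μ'·r' with μ·μ' ≠ 0 (so ⟨a,a⟩ = 2μμ'⟨r,r'⟩ ≠ 0) the Lie inversion σ_a maps f' onto f and f onto f'. (Lemma: the Lie inversions associated to an edge of a discrete Ribaucour sphere congruence exchange adjacent contact elements of any envelope.) -/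

import Mathlib

/-!
Since `f'` is isotropic and `⟨r, r'⟩ ≠ 0`, `r ∉ f'`; so `f ⊓ f'` is a nonzero proper subspace of
the plane `f`, hence a line, and `f` is spanned by it together with `r` (likewise for `f'`).
Every `s ∈ f ⊓ f'` is orthogonal to `a = μ r + μ' r'` and hence fixed by `σ_a`, while
`σ_a r' = -(μ/μ') r ∈ f`. Thus `σ_a` maps `f'` into `f`, symmetrically `f` into `f'`, and being an
involution it exchanges them.
-/

noncomputable section

/-- The vector space ℝ^{4,2}, modeled as `Fin 6 → ℝ`. -/
abbrev R42 : Type := Fin 6 → ℝ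

/-- The symmetric bilinear form of signature (4,2) on ℝ^{4,2}. -/
def bform : R42 →ₗ[ℝ] R42 →ₗ[ℝ] ℝ :=
  LinearMap.mk₂ ℝ
    (fun x y => x 0 * y 0 + x 1 * y 1 + x 2 * y 2 + x 3 * y 3 - x 4 * y 4 - x 5 * y 5)
    (fun x x' y => by simp only [Pi.add_apply]; ring)
    (fun c x y => by simp only [Pi.smul_apply, smul_eq_mul]; ring)
    (fun x y y' => by simp only [Pi.add_apply]; ring)
    (fun c x y => by simp only [Pi.smul_apply, smul_eq_mul]; ring)

/-- A lightlike vector: nonzero and isotropic. Represents an oriented 2-sphere. -/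
def IsLightlike (v : R42) : Prop := v ≠ 0 ∧ bform v v = 0

/-- The Lie inversion with respect to the linear sphere complex determined by `a`. -/
def lieInv (a r : R42) : R42 := r - (2 * bform r a / bform a a) • a

namespace Submodule

variable {K V : Type*} [DivisionRing K] [AddCommGroup V] [Module K V]
  {p q : Submodule K V} {x : V}

theorem finrank_inf_eq_one_of_finrank_eq_two (hp : Module.finrank K p = 2) (hpq : p ⊓ q ≠ ⊥)
    (hxp : x ∈ p) (hxq : x ∉ q) : Module.finrank K ↥(p ⊓ q) = 1 := by
  have : FiniteDimensional K p := .of_finrank_eq_succ hp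
  have hlt : p ⊓ q < p := inf_lt_left.2 fun hle => hxq (hle hxp)
  have hpos : 0 < Module.finrank K ↥(p ⊓ q) :=
    Module.finrank_pos_iff.2 (nontrivial_iff_ne_bot.2 hpq)
  have := finrank_lt_finrank_of_lt hlt
  omega

theorem eq_span_union_inf_of_finrank_eq_two (hp : Module.finrank K p = 2) (hpq : p ⊓ q ≠ ⊥)
    (hxp : x ∈ p) (hxq : x ∉ q) : p = span K ({x} ∪ ((p ⊓ q : Submodule K V) : Set V)) := by
  set W := span K ({x} ∪ ((p ⊓ q : Submodule K V) : Set V))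
  have : FiniteDimensional K p := .of_finrank_eq_succ hp
  have hWp : W ≤ p :=
    span_le.2 (Set.union_subset (Set.singleton_subset_iff.2 hxp) fun _ hy => hy.1)
  have : FiniteDimensional K W := finiteDimensional_of_le hWp
  have hlt : p ⊓ q < W := SetLike.lt_iff_le_and_exists.2
    ⟨fun _ hy => subset_span (Or.inr hy), x, subset_span (Or.inl rfl), fun h => hxq h.2⟩
  have := finrank_lt_finrank_of_lt hlt
  have := finrank_inf_eq_one_of_finrank_eq_two hp hpq hxp hxq
  exact (eq_of_le_of_finrank_le hWp (by omega)).symm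

end Submodule

theorem bform_comm (x y : R42) : bform x y = bform y x := by
  simp only [bform, LinearMap.mk₂_apply]; ring

def lieInvₗ (a : R42) : R42 →ₗ[ℝ] R42 where
  toFun := lieInv a
  map_add' x y := by
    simp only [lieInv, map_add, LinearMap.add_apply, mul_add, add_div, add_smul]; abel
  map_smul' c x := by
    simp only [lieInv, map_smul, LinearMap.smul_apply, smul_eq_mul, RingHom.id_apply]
    rw [smul_sub, smul_smul]; congr 2; ring

theorem lieInv_involutive {a : R42} (ha : bform a a ≠ 0) : Function.Involutive (lieInv a) := by
  intro v
  have hva : bform (lieInv a v) a = -bform v a := by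
    simp only [lieInv, map_sub, map_smul, LinearMap.sub_apply, LinearMap.smul_apply, smul_eq_mul]
    field_simp
    ring
  rw [lieInv, hva, lieInv]
  module

theorem lieInv_of_bform_eq_zero {a v : R42} (h : bform v a = 0) : lieInv a v = v := by
  simp [lieInv, h]

theorem bform_smul_add_smul_self {r r' : R42} (hr : bform r r = 0) (hr' : bform r' r' = 0)
    (μ μ' : ℝ) : bform (μ • r + μ' • r') (μ • r + μ' • r') = 2 * μ * μ' * bform r r' := by
  simp only [map_add, map_smul, LinearMap.add_apply, LinearMap.smul_apply, smul_eq_mul, hr, hr',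
    bform_comm r' r]
  ring

theorem lieInv_smul_add_smul_right {r r' : R42} (hr : bform r r = 0) (hr' : bform r' r' = 0)
    (hrr' : bform r r' ≠ 0) {μ μ' : ℝ} (hμ : μ ≠ 0) (hμ' : μ' ≠ 0) :
    lieInv (μ • r + μ' • r') r' = -(μ / μ') • r := by
  have hr'a : bform r' (μ • r + μ' • r') = μ * bform r r' := by
    simp [hr', bform_comm r' r]
  rw [lieInv, hr'a, bform_smul_add_smul_self hr hr']
  have : 2 * (μ * bform r r') / (2 * μ * μ' * bform r r') = 1 / μ' := by
    field_simp
  rw [this, smul_add, smul_smul, smul_smul, one_div_mul_cancel hμ', one_smul]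
  module

theorem lieInv_mapsTo {f f' : Submodule ℝ R42}
    (hfiso : ∀ u ∈ f, ∀ v ∈ f, bform u v = 0) (hf'iso : ∀ u ∈ f', ∀ v ∈ f', bform u v = 0)
    {r r' : R42} (hr : r ∈ f) (hr' : r' ∈ f') (hrr' : bform r r' ≠ 0)
    (hf' : f' = Submodule.span ℝ ({r'} ∪ ((f ⊓ f' : Submodule ℝ R42) : Set R42)))
    {μ μ' : ℝ} (hμ : μ ≠ 0) (hμ' : μ' ≠ 0) :
    Set.MapsTo (lieInv (μ • r + μ' • r')) f' f := by
  suffices f' ≤ f.comap (lieInvₗ (μ • r + μ' • r')) from this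
  rw [hf', Submodule.span_le]
  refine Set.union_subset (Set.singleton_subset_iff.2 ?_) fun s hs => ?_
  · show lieInv _ r' ∈ f
    rw [lieInv_smul_add_smul_right (hfiso r hr r hr) (hf'iso r' hr' r' hr') hrr' hμ hμ']
    exact f.smul_mem _ hr
  · have hsa : bform s (μ • r + μ' • r') = 0 := by
      simp [hfiso s hs.1 r hr, hf'iso s hs.2 r' hr']
    show lieInv _ s ∈ f
    rw [lieInv_of_bform_eq_zero hsa]
    exact hs.1

theorem Function.Involutive.image_eq_of_mapsTo {α : Type*} {σ : α → α} {s t : Set α}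
    (hσ : σ.Involutive) (hst : Set.MapsTo σ s t) (hts : Set.MapsTo σ t s) : σ '' s = t :=
  (Set.RightInvOn.surjOn (fun y _ => hσ y) hts).image_eq_of_mapsTo hst

theorem stmt_8_general (f f' : Submodule ℝ R42)
    (hf2 : Module.finrank ℝ f = 2) (hf'2 : Module.finrank ℝ f' = 2)
    (hfiso : ∀ u ∈ f, ∀ v ∈ f, bform u v = 0)
    (hf'iso : ∀ u ∈ f', ∀ v ∈ f', bform u v = 0)
    (hint : f ⊓ f' ≠ ⊥)
    (r r' : R42) (hr : r ∈ f) (hr' : r' ∈ f')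
    (hrr' : bform r r' ≠ 0) :
    Module.finrank ℝ ↥(f ⊓ f') = 1 ∧
    f = Submodule.span ℝ ({r} ∪ ((f ⊓ f' : Submodule ℝ R42) : Set R42)) ∧
    f' = Submodule.span ℝ ({r'} ∪ ((f ⊓ f' : Submodule ℝ R42) : Set R42)) ∧
    ∀ μ μ' : ℝ, μ * μ' ≠ 0 →
      ∀ a : R42, a = μ • r + μ' • r' →
        bform a a = 2 * μ * μ' * bform r r' ∧ bform a a ≠ 0 ∧
        lieInv a '' (f' : Set R42) = (f : Set R42) ∧
        lieInv a '' (f : Set R42) = (f' : Set R42) := by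
  have hrf' : r ∉ f' := fun h => hrr' (hf'iso r h r' hr')
  have hr'f : r' ∉ f := fun h => hrr' (hfiso r hr r' h)
  have hf := Submodule.eq_span_union_inf_of_finrank_eq_two hf2 hint hr hrf'
  have hf' := Submodule.eq_span_union_inf_of_finrank_eq_two hf'2 (inf_comm f f' ▸ hint) hr' hr'f
  rw [inf_comm] at hf'
  refine ⟨Submodule.finrank_inf_eq_one_of_finrank_eq_two hf2 hint hr hrf', hf, hf', ?_⟩
  rintro μ μ' hμμ' a rfl
  obtain ⟨hμ, hμ'⟩ := mul_ne_zero_iff.1 hμμ'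
  have haa := bform_smul_add_smul_self (hfiso r hr r hr) (hf'iso r' hr' r' hr') μ μ'
  have haa0 : bform (μ • r + μ' • r') (μ • r + μ' • r') ≠ 0 := by
    rw [haa]; exact mul_ne_zero (mul_ne_zero (mul_ne_zero two_ne_zero hμ) hμ') hrr'
  have hσ := lieInv_involutive haa0
  have hf'f := lieInv_mapsTo hfiso hf'iso hr hr' hrr' hf' hμ hμ'
  have hff' : Set.MapsTo (lieInv (μ • r + μ' • r')) f f' := by
    rw [inf_comm] at hf
    rw [add_comm]
    exact lieInv_mapsTo hf'iso hfiso hr' hr (bform_comm r r' ▸ hrr') hf hμ' hμ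
  exact ⟨haa, haa0, hσ.image_eq_of_mapsTo hf'f hff', hσ.image_eq_of_mapsTo hff' hf'f⟩

/-- Two contact elements `f`, `f'` with nontrivial intersection,
containing non-orthogonal spheres `r ∈ f`, `r' ∈ f'`: the intersection is exactly
1-dimensional, `f = span({r} ∪ (f ⊓ f'))`, `f' = span({r'} ∪ (f ⊓ f'))`, and for
every `a = μ•r + μ'•r'` with `μμ' ≠ 0` the Lie inversion `σ_a` interchanges
`f` and `f'`. -/
theorem stmt_8 (f f' : Submodule ℝ R42)
    (hf2 : Module.finrank ℝ f = 2) (hf'2 : Module.finrank ℝ f' = 2)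
    (hfiso : ∀ u ∈ f, ∀ v ∈ f, bform u v = 0)
    (hf'iso : ∀ u ∈ f', ∀ v ∈ f', bform u v = 0)
    (hint : f ⊓ f' ≠ ⊥)
    (r r' : R42) (hr : r ∈ f) (hr' : r' ∈ f')
    (hr0 : r ≠ 0) (hr'0 : r' ≠ 0) (hrr' : bform r r' ≠ 0) :
    Module.finrank ℝ ↥(f ⊓ f') = 1 ∧
    f = Submodule.span ℝ ({r} ∪ ((f ⊓ f' : Submodule ℝ R42) : Set R42)) ∧
    f' = Submodule.span ℝ ({r'} ∪ ((f ⊓ f' : Submodule ℝ R42) : Set R42)) ∧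
    ∀ μ μ' : ℝ, μ * μ' ≠ 0 →
      ∀ a : R42, a = μ • r + μ' • r' →
        bform a a = 2 * μ * μ' * bform r r' ∧ bform a a ≠ 0 ∧
        lieInv a '' (f' : Set R42) = (f : Set R42) ∧
        lieInv a '' (f : Set R42) = (f' : Set R42) :=
  stmt_8_general f f' hf2 hf'2 hfiso hf'iso hint r r' hr hr' hrr'
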